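/- Let a ∈ ℂ, a ≠ 0. There exist a constant C > 0 and an integer N such that for all n ≥ N and all z ∈ ℂ with |z| ≤ 1, the series defining α_n(z) converges absolutely and |α_n(z)| ≤ C/n². -/

import Mathlib

open Complex

/-- Extended walk: `extWalk b e k j i` equals `b` for `i = 0`, `j (i-1)` for `1 ≤ i ≤ k`,
and `e` for `i > k`. -/
def extWalk (b e : ℤ) (k : ℕ) (j : Fin k → ℤ) : ℕ → ℤ := fun i =>
  if h : 1 ≤ i ∧ i ≤ k then j ⟨i - 1, by omega⟩ else if i = 0 then b else e

/-- Generic term of the sums `S_k^{ij}(n,z)`: for a `k`-tuple `j` of integers avoiding `±n`,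
the value `V(j₁ - b) V(j₂ - j₁) ⋯ V(j_k - j_{k-1}) V(e - j_k) / ∏_s (n² - j_s² + z)`. -/
noncomputable def Sterm (V : ℤ → ℂ) (n : ℕ) (z : ℂ) (b e : ℤ) (k : ℕ)
    (j : Fin k → {m : ℤ // m ≠ (n : ℤ) ∧ m ≠ -(n : ℤ)}) : ℂ :=
  (∏ i ∈ Finset.range (k + 1),
      V (extWalk b e k (fun s => (j s : ℤ)) (i + 1) - extWalk b e k (fun s => (j s : ℤ)) i)) /
    ∏ s : Fin k, ((n : ℂ) ^ 2 - ((j s : ℤ) : ℂ) ^ 2 + z)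

/-- The Mathieu Fourier coefficients: `V(2) = V(-2) = a` and `V(m) = 0` for `m ≠ ±2`. -/
noncomputable def mathieuV (a : ℂ) : ℤ → ℂ := fun m => if m = 2 ∨ m = -2 then a else 0

/-- `A_p(n,z)` for the Mathieu potential: the sum over `p`-tuples `(j₁,…,j_p)` of integers
avoiding `±n` of `V(-n+j₁) V(j₂-j₁) ⋯ V(j_p-j_{p-1}) V(n-j_p) / ∏_s (n²-j_s²+z)`. -/
noncomputable def Acoef (a : ℂ) (n : ℕ) (z : ℂ) (p : ℕ) : ℂ :=
  ∑' j : Fin p → {m : ℤ // m ≠ (n : ℤ) ∧ m ≠ -(n : ℤ)},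
    Sterm (mathieuV a) n z (n : ℤ) (n : ℤ) p j

/-- `α_n(z) = ∑_{p=1}^∞ A_p(n,z)`. -/
noncomputable def alphaC (a : ℂ) (n : ℕ) (z : ℂ) : ℂ := ∑' p : ℕ, Acoef a n z (p + 1)

/-! Every nonzero term of `A_p(n, z)` is a walk `n = j₀, j₁, …, j_p, j_{p+1} = n` with steps `±2`,
so it is determined by its `p` step signs, and each denominator satisfies
`|n² - j² + z| ≥ |n - j| |n + j| - 1 ≥ 2n - 2`. Hence `|A_p| ≤ |a| (|a| / (n - 1))^p`, and the
terms with `p ≥ 2` contribute `O(|a|³ / n²)`. The remaining term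
`A_1 = a² / (4n - 4 + z) + a² / (-4n - 4 + z)` is only `O(1/n)` termwise, but its two halves
cancel to `O(|a|² / n²)`. -/

open Function

lemma extWalk_zero (b e : ℤ) (k : ℕ) (j : Fin k → ℤ) : extWalk b e k j 0 = b := by
  simp [extWalk]

lemma extWalk_succ (b e : ℤ) (k : ℕ) (j : Fin k → ℤ) (s : Fin k) :
    extWalk b e k j (s + 1) = j s := by
  simp [extWalk]

lemma extWalk_of_lt (b e : ℤ) (k : ℕ) (j : Fin k → ℤ) {i : ℕ} (h : k < i) :
    extWalk b e k j i = e := by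
  simp only [extWalk, dif_neg (by omega : ¬(1 ≤ i ∧ i ≤ k)), if_neg (by omega : i ≠ 0)]

def walkIncrements (b e : ℤ) (k : ℕ) (j : Fin k → ℤ) : Fin k → ℤ :=
  fun s => extWalk b e k j (s + 1) - extWalk b e k j s

lemma walkIncrements_injective (b e : ℤ) (k : ℕ) : Injective (walkIncrements b e k) := by
  intro j j' h
  have hwalk : ∀ i ≤ k, extWalk b e k j i = extWalk b e k j' i := by
    intro i
    induction i with
    | zero => simp [extWalk_zero]
    | succ i ih =>
      intro hi
      have hs := congrFun h ⟨i, hi⟩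
      simp only [walkIncrements] at hs
      linarith [ih (by omega)]
  funext s
  simpa [extWalk_succ] using hwalk (s + 1) s.isLt

lemma norm_tsum_le_card_mul {α β E : Type*} [NormedAddCommGroup E] {f : α → E} {g : α → β}
    (hg : Injective g) {T : Finset β} (hT : ∀ x, f x ≠ 0 → g x ∈ T) {M : ℝ} (hM₀ : 0 ≤ M)
    (hM : ∀ x, ‖f x‖ ≤ M) : ‖∑' x, f x‖ ≤ T.card * M := by
  classical
  rw [tsum_eq_sum (s := T.preimage g hg.injOn) fun x hx => by_contra fun h =>
    hx (Finset.mem_preimage.2 (hT x h))]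
  calc ‖∑ x ∈ T.preimage g hg.injOn, f x‖
      ≤ ∑ x ∈ T.preimage g hg.injOn, ‖f x‖ := norm_sum_le _ _
    _ ≤ (T.preimage g hg.injOn).card * M := by
      simpa using Finset.sum_le_card_nsmul _ _ _ fun x _ => hM x
    _ ≤ T.card * M := by
      gcongr
      exact Finset.card_le_card_of_injOn g (fun x hx => Finset.mem_preimage.1 hx) hg.injOn

lemma two_mul_sub_one_le_abs_sq_sub_sq {n j : ℤ} (h₁ : j ≠ n) (h₂ : j ≠ -n) :
    2 * n - 1 ≤ |n ^ 2 - j ^ 2| := by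
  have hx : 1 ≤ |n - j| := Int.one_le_abs (sub_ne_zero.2 h₁.symm)
  have hy : 1 ≤ |n + j| := Int.one_le_abs (by omega)
  -- `x y ≥ x + y - 1` for `x, y ≥ 1`, and `|n - j| + |n + j| ≥ 2 n`
  calc 2 * n - 1 ≤ |n - j| * |n + j| := by
        nlinarith [le_abs_self (n - j), le_abs_self (n + j)]
    _ = |n ^ 2 - j ^ 2| := by rw [← abs_mul]; ring_nf

lemma two_mul_sub_two_le_norm_sq_sub_sq_add {n j : ℤ} {z : ℂ} (hz : ‖z‖ ≤ 1)
    (h₁ : j ≠ n) (h₂ : j ≠ -n) : 2 * (n : ℝ) - 2 ≤ ‖(n : ℂ) ^ 2 - (j : ℂ) ^ 2 + z‖ := by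
  have hgap : 2 * (n : ℝ) - 1 ≤ ‖(n : ℂ) ^ 2 - (j : ℂ) ^ 2‖ := by
    have := two_mul_sub_one_le_abs_sq_sub_sq h₁ h₂
    rw [← Int.cast_pow, ← Int.cast_pow, ← Int.cast_sub, Complex.norm_intCast]
    exact_mod_cast this
  have := norm_sub_norm_le ((n : ℂ) ^ 2 - (j : ℂ) ^ 2) (-z)
  rw [norm_neg, sub_neg_eq_add] at this
  linarith

section

variable {V : ℤ → ℂ} {n : ℕ} {z : ℂ} {b e : ℤ} {p : ℕ}

lemma norm_Sterm_le {K : ℝ} (hV : ∀ m, ‖V m‖ ≤ K) (hn : 2 ≤ n) (hz : ‖z‖ ≤ 1)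
    (j : Fin p → {m : ℤ // m ≠ (n : ℤ) ∧ m ≠ -(n : ℤ)}) :
    ‖Sterm V n z b e p j‖ ≤ K ^ (p + 1) / (2 * (n : ℝ) - 2) ^ p := by
  have hK : 0 ≤ K := (norm_nonneg _).trans (hV 0)
  have hpos : (0 : ℝ) < 2 * n - 2 := by
    have : (2 : ℝ) ≤ n := by exact_mod_cast hn
    linarith
  rw [Sterm, norm_div, norm_prod, norm_prod]
  gcongr
  · exact (Finset.prod_le_prod (fun _ _ => norm_nonneg _) fun i _ => hV _).trans_eq (by simp)
  · refine (Finset.prod_le_prod (fun _ _ => hpos.le) fun s _ => ?_).trans_eq' (by simp)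
    exact_mod_cast two_mul_sub_two_le_norm_sq_sub_sq_add (n := n) hz (j s).2.1 (j s).2.2

lemma walkIncrements_mem_piFinset {T : Finset ℤ} (hT : ∀ m, V m ≠ 0 → m ∈ T)
    {j : Fin p → {m : ℤ // m ≠ (n : ℤ) ∧ m ≠ -(n : ℤ)}} (hj : Sterm V n z b e p j ≠ 0) :
    walkIncrements b e p (fun s => (j s : ℤ)) ∈ Fintype.piFinset fun _ => T := by
  rw [Fintype.mem_piFinset]
  intro s
  rw [Sterm, div_ne_zero_iff] at hj
  exact hT _ (Finset.prod_ne_zero_iff.1 hj.1 s (Finset.mem_range.2 (by omega)))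

lemma norm_tsum_Sterm_le {K : ℝ} (hV : ∀ m, ‖V m‖ ≤ K) {T : Finset ℤ}
    (hT : ∀ m, V m ≠ 0 → m ∈ T) (hn : 2 ≤ n) (hz : ‖z‖ ≤ 1) :
    ‖∑' j, Sterm V n z b e p j‖ ≤ T.card ^ p * (K ^ (p + 1) / (2 * (n : ℝ) - 2) ^ p) := by
  have hK : 0 ≤ K := (norm_nonneg _).trans (hV 0)
  have hpos : (0 : ℝ) ≤ 2 * n - 2 := by
    have : (2 : ℝ) ≤ n := by exact_mod_cast hn
    linarith
  have := norm_tsum_le_card_mul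
    ((walkIncrements_injective b e p).comp (Subtype.val_injective.comp_left))
    (fun j hj => walkIncrements_mem_piFinset hT hj) (by positivity) (norm_Sterm_le hV hn hz)
  simpa [Fintype.card_piFinset] using this

lemma norm_mathieuV_le (a : ℂ) (m : ℤ) : ‖mathieuV a m‖ ≤ ‖a‖ := by
  unfold mathieuV; split <;> simp

lemma mem_of_mathieuV_ne_zero {a : ℂ} {m : ℤ} (h : mathieuV a m ≠ 0) :
    m ∈ ({2, -2} : Finset ℤ) := by
  by_contra hm
  simp only [Finset.mem_insert, Finset.mem_singleton] at hm
  exact h (if_neg hm)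

lemma norm_Acoef_le (a : ℂ) (hn : 2 ≤ n) (hz : ‖z‖ ≤ 1) (p : ℕ) :
    ‖Acoef a n z p‖ ≤ ‖a‖ * (‖a‖ / (n - 1)) ^ p := by
  have hn' : (0 : ℝ) < n - 1 := by
    have : (2 : ℝ) ≤ n := by exact_mod_cast hn
    linarith
  refine (norm_tsum_Sterm_le (norm_mathieuV_le a) (fun _ => mem_of_mathieuV_ne_zero) hn
    hz).trans_eq ?_
  rw [show ({2, -2} : Finset ℤ).card = 2 by rfl, show 2 * (n : ℝ) - 2 = 2 * (n - 1) by ring,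
    div_pow, mul_pow, pow_succ]
  field_simp
  push_cast
  ring

lemma Sterm_one (j : Fin 1 → {m : ℤ // m ≠ (n : ℤ) ∧ m ≠ -(n : ℤ)}) :
    Sterm V n z b e 1 j =
      V (j 0 - b) * V (e - j 0) / ((n : ℂ) ^ 2 - ((j 0 : ℤ) : ℂ) ^ 2 + z) := by
  rw [Sterm, Finset.prod_range_succ, Finset.prod_range_one, Fin.prod_univ_one, extWalk_zero,
    extWalk_of_lt _ _ _ _ (by norm_num : 1 < 2), zero_add]
  have hj : extWalk b e 1 (fun s => (j s : ℤ)) 1 = j 0 := extWalk_succ b e 1 _ 0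
  rw [hj]

lemma Acoef_one (a : ℂ) (hn : n ≠ 1) :
    Acoef a n z 1 = a ^ 2 / (4 * n - 4 + z) + a ^ 2 / (-4 * n - 4 + z) := by
  let X := {m : ℤ // m ≠ (n : ℤ) ∧ m ≠ -(n : ℤ)}
  let below : X := ⟨n - 2, by omega⟩
  let above : X := ⟨n + 2, by omega⟩
  have hsum : Acoef a n z 1 = ∑' m : X,
      mathieuV a (m - n) * mathieuV a (n - m) / ((n : ℂ) ^ 2 - ((m : ℤ) : ℂ) ^ 2 + z) := by
    rw [Acoef, ← (Equiv.funUnique (Fin 1) X).symm.tsum_eq]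
    simp [Sterm_one]
  rw [hsum, tsum_eq_sum (s := {below, above}),
    Finset.sum_pair (Subtype.coe_ne_coe.1 (by dsimp [below, above]; omega))]
  · simp only [below, above, mathieuV]
    norm_num
    ring_nf
  · intro m hm
    rw [mathieuV, if_neg, zero_mul, zero_div]
    rintro (h | h)
    · exact hm (Finset.mem_insert_of_mem
        (Finset.mem_singleton.2 (Subtype.ext (by dsimp [above]; omega))))
    · exact hm ((Subtype.ext (by dsimp [below]; omega) : m = below) ▸ Finset.mem_insert_self _ _)

lemma norm_Acoef_one_le (a : ℂ) (hn : 3 ≤ n) (hz : ‖z‖ ≤ 1) :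
    ‖Acoef a n z 1‖ ≤ ‖a‖ ^ 2 / n ^ 2 := by
  have hn' : (3 : ℝ) ≤ n := by exact_mod_cast hn
  have hw : ‖z - 4‖ ≤ 5 := (norm_sub_le _ _).trans (by norm_num; linarith)
  have hden : 10 * (n : ℝ) ^ 2 ≤ ‖(z - 4) ^ 2 - 16 * (n : ℂ) ^ 2‖ := by
    have h := norm_sub_norm_le (16 * (n : ℂ) ^ 2) ((z - 4) ^ 2)
    rw [norm_sub_rev, norm_pow] at h
    have h16 : ‖16 * (n : ℂ) ^ 2‖ = 16 * (n : ℝ) ^ 2 := by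
      rw [show 16 * (n : ℂ) ^ 2 = ((16 * n ^ 2 : ℕ) : ℂ) by push_cast; ring, Complex.norm_natCast]
      push_cast; ring
    nlinarith [norm_nonneg (z - 4)]
  have hprod : (4 * n - 4 + z) * (-4 * n - 4 + z) = (z - 4) ^ 2 - 16 * (n : ℂ) ^ 2 := by ring
  have hne : (4 * n - 4 + z) * (-4 * n - 4 + z) ≠ 0 := by
    rw [← norm_ne_zero_iff, hprod]
    nlinarith
  rw [Acoef_one a (by omega), div_add_div _ _ (left_ne_zero_of_mul hne) (right_ne_zero_of_mul hne),
    show a ^ 2 * (-4 * n - 4 + z) + (4 * n - 4 + z) * a ^ 2 = a ^ 2 * (2 * (z - 4)) by ring,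
    hprod, norm_div, norm_mul, norm_mul, norm_pow]
  calc ‖a‖ ^ 2 * (‖(2 : ℂ)‖ * ‖z - 4‖) / ‖(z - 4) ^ 2 - 16 * (n : ℂ) ^ 2‖
      ≤ ‖a‖ ^ 2 * 10 / (10 * n ^ 2) := by
        gcongr
        norm_num
        linarith
    _ = ‖a‖ ^ 2 / n ^ 2 := by field_simp

lemma norm_tsum_le_norm_zero_add_geometric {E : Type*} [NormedAddCommGroup E] [CompleteSpace E]
    {f : ℕ → E} {K r : ℝ} (hr₀ : 0 ≤ r) (hr₁ : r < 1) (hf : ∀ p, ‖f (p + 1)‖ ≤ K * r ^ (p + 1)) :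
    Summable (fun p => ‖f p‖) ∧ ‖∑' p, f p‖ ≤ ‖f 0‖ + K * r / (1 - r) := by
  have hgeom : HasSum (fun p => K * r ^ (p + 1)) (K * r / (1 - r)) := by
    simpa [div_eq_mul_inv, pow_succ, mul_assoc, mul_comm r] using
      (hasSum_geometric_of_lt_one hr₀ hr₁).mul_left (K * r)
  have hsum : Summable (fun p => ‖f p‖) :=
    (summable_nat_add_iff 1).1 (hgeom.summable.of_nonneg_of_le (fun _ => norm_nonneg _) hf)
  refine ⟨hsum, ?_⟩
  rw [hsum.of_norm.tsum_eq_zero_add]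
  exact (norm_add_le _ _).trans (by gcongr; exact tsum_of_norm_bounded hgeom hf)

lemma summable_norm_Acoef_and_norm_alphaC_le (a : ℂ) (hn : 2 * ‖a‖ + 3 ≤ (n : ℝ))
    (hz : ‖z‖ ≤ 1) : Summable (fun p : ℕ => ‖Acoef a n z (p + 1)‖) ∧
      ‖alphaC a n z‖ ≤ (‖a‖ ^ 2 + 8 * ‖a‖ ^ 3) / n ^ 2 := by
  have ha : 0 ≤ ‖a‖ := norm_nonneg a
  have hn₃ : 3 ≤ n := by exact_mod_cast (by linarith : (3 : ℝ) ≤ n)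
  set r := ‖a‖ / (n - 1) with hr
  have hr₀ : 0 ≤ r := div_nonneg ha (by linarith)
  have hr₁ : r ≤ 1 / 2 := by rw [hr, div_le_iff₀ (by linarith)]; linarith
  obtain ⟨hsum, hbound⟩ := norm_tsum_le_norm_zero_add_geometric
    (f := fun p => Acoef a n z (p + 1)) (K := ‖a‖ * r) hr₀ (by linarith)
    fun p => (norm_Acoef_le a (by omega) hz (p + 1 + 1)).trans_eq (by rw [← hr]; ring)
  refine ⟨hsum, hbound.trans ?_⟩
  have htail : ‖a‖ * r * r / (1 - r) ≤ 8 * ‖a‖ ^ 3 / n ^ 2 := by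
    have hrn : r ≤ 2 * ‖a‖ / n := by
      rw [hr, div_le_div_iff₀ (by linarith) (by linarith)]
      nlinarith
    calc ‖a‖ * r * r / (1 - r) ≤ ‖a‖ * r * r / (1 / 2) := by gcongr; linarith
      _ = 2 * ‖a‖ * r ^ 2 := by ring
      _ ≤ 2 * ‖a‖ * (2 * ‖a‖ / n) ^ 2 := by gcongr
      _ = 8 * ‖a‖ ^ 3 / n ^ 2 := by ring
  rw [add_div]
  exact add_le_add (norm_Acoef_one_le a hn₃ hz) htail

end

/-- There are `C > 0` and `N` such that for all `n ≥ N` and `|z| ≤ 1` the series defining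
`α_n(z)` converges absolutely and `|α_n(z)| ≤ C/n²`. -/
theorem mathieu_stmt_10 (a : ℂ) (ha : a ≠ 0) :
    ∃ C > (0 : ℝ), ∃ N : ℕ, ∀ n ≥ N, ∀ z : ℂ, ‖z‖ ≤ 1 →
      Summable (fun p : ℕ => ‖Acoef a n z (p + 1)‖) ∧
      ‖alphaC a n z‖ ≤ C / (n : ℝ) ^ 2 := by
  have ha' : 0 < ‖a‖ := norm_pos_iff.2 ha
  refine ⟨‖a‖ ^ 2 + 8 * ‖a‖ ^ 3, by positivity, ⌈2 * ‖a‖⌉₊ + 3, fun n hn z hz => ?_⟩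
  refine summable_norm_Acoef_and_norm_alphaC_le a ?_ hz
  have hceil : ((⌈2 * ‖a‖⌉₊ + 3 : ℕ) : ℝ) ≤ n := by exact_mod_cast hn
  push_cast at hceil
  linarith [Nat.le_ceil (2 * ‖a‖)]
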